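/- Let D^{(0)}, D^{(1)}, D^{(2)}, D^{(3)} be the matrices over U(𝔤_t) given in the Engel Rumin complex: D^{(0)} = (X1, X2, 0, 0)ᵀ; D^{(1)} is the 6×4 matrix whose only nonzero rows are row 3 = (−X2², X2X1−X3, 0, 0) and row 4 = (−X4−(X1²X2+X1X3)/t, X1³/t, 0, 0); D^{(2)} is the 4×6 matrix whose only nonzero rows are row 3 = (0,0, X1³/t, −X3−X1X2, 0,0) and row 4 = (0,0, (X1²X2−3X3X1)/t, −X2², 0,0); D^{(3)} = (0, 0, −X2, X1). Then D^{(1)}·D^{(0)} = 0, D^{(2)}·D^{(1)} = 0, and D^{(3)}·D^{(2)} = 0 (i.e., D∘D = 0 for the Rumin differential of the Engel group). -/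

import Mathlib

/-- The underlying type of the Engel Lie algebra `𝔤_t`. -/
def EngelAlg (_t : ℝ) : Type := Fin 4 → ℝ

noncomputable instance (t : ℝ) : AddCommGroup (EngelAlg t) :=
  inferInstanceAs (AddCommGroup (Fin 4 → ℝ))

noncomputable instance (t : ℝ) : Module ℝ (EngelAlg t) :=
  inferInstanceAs (Module ℝ (Fin 4 → ℝ))


@[simp] lemma EngelAlg.add_apply {t : ℝ} (x y : EngelAlg t) (i : Fin 4) :
    (x + y) i = x i + y i := rfl
@[simp] lemma EngelAlg.smul_apply {t : ℝ} (r : ℝ) (x : EngelAlg t) (i : Fin 4) :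
    (r • x) i = r * x i := rfl
@[simp] lemma EngelAlg.zero_apply {t : ℝ} (i : Fin 4) : (0 : EngelAlg t) i = 0 := rfl

/-- The Engel bracket: `[X1,X2] = X3`, `[X1,X3] = t·X4`. -/
def engelBracket (t : ℝ) (x y : Fin 4 → ℝ) : Fin 4 → ℝ := fun i =>
  if i = 2 then x 0 * y 1 - x 1 * y 0
  else if i = 3 then t * (x 0 * y 2 - x 2 * y 0) else 0

noncomputable instance (t : ℝ) : LieRing (EngelAlg t) where
  bracket x y := engelBracket t x y
  add_lie x y z := by
    funext i; change _ = engelBracket t x z i + engelBracket t y z i; fin_cases i <;>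
      simp [engelBracket, EngelAlg.add_apply, EngelAlg.zero_apply, Pi.add_apply, Pi.zero_apply] <;> ring
  lie_add x y z := by
    funext i; change _ = engelBracket t x y i + engelBracket t x z i; fin_cases i <;>
      simp [engelBracket, EngelAlg.add_apply, EngelAlg.zero_apply, Pi.add_apply, Pi.zero_apply] <;> ring
  lie_self x := by
    funext i; fin_cases i <;>
      simp [engelBracket, EngelAlg.zero_apply, Pi.zero_apply, mul_comm, sub_self]
  leibniz_lie x y z := by
    funext i; change _ = engelBracket t (engelBracket t x y) z i + engelBracket t y (engelBracket t x z) i; fin_cases i <;>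
      simp [engelBracket, EngelAlg.add_apply, EngelAlg.zero_apply, Pi.add_apply, Pi.zero_apply] <;> ring

noncomputable instance (t : ℝ) : LieAlgebra ℝ (EngelAlg t) where
  lie_smul r x y := by
    funext i; change _ = r * engelBracket t x y i; fin_cases i <;>
      simp [Bracket.bracket, engelBracket, EngelAlg.smul_apply, EngelAlg.zero_apply, Pi.smul_apply, smul_eq_mul] <;> ring

/-- The canonical basis vectors `X1, X2, X3, X4` (indexed by `Fin 4`). -/
noncomputable def X (t : ℝ) (i : Fin 4) : EngelAlg t := Pi.single i 1


/-- The universal enveloping algebra `U(𝔤_t)`. -/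
noncomputable abbrev UEngel (t : ℝ) := UniversalEnvelopingAlgebra ℝ (EngelAlg t)

/-- The images `X1, X2, X3, X4` of the canonical basis in `U(𝔤_t)`
(indexed by `Fin 4`). -/
noncomputable def XU (t : ℝ) (i : Fin 4) : UEngel t :=
  UniversalEnvelopingAlgebra.ι ℝ (X t i)

open Matrix

/-!
In `U(𝔤_t)` the generators satisfy `X₁X₂ = X₂X₁ + X₃`, `X₁X₃ = X₃X₁ + t X₄`, and all other pairs
commute. These relations alone make every entry of `D⁽ᵏ⁺¹⁾ D⁽ᵏ⁾` vanish: rewriting with them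
brings each entry to the normal-ordered form `∑ c · X₄ᵃ X₃ᵇ X₂ᶜ X₁ᵈ`, in which all coefficients
cancel. So the identities hold for any four elements of an algebra satisfying these relations.
-/

theorem mul_mul_eq_of_mul_eq {M : Type*} [Semigroup M] {a b c : M} (h : a * b = c) (d : M) :
    a * (b * d) = c * d := by
  rw [← mul_assoc, h]

structure IsEngelTuple {K A : Type*} [Field K] [Ring A] [Algebra K A] (t : K) (x₁ x₂ x₃ x₄ : A) :
    Prop where
  comm₁₂ : x₁ * x₂ = x₂ * x₁ + x₃
  comm₁₃ : x₁ * x₃ = x₃ * x₁ + t • x₄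
  comm₁₄ : x₁ * x₄ = x₄ * x₁
  comm₂₃ : x₂ * x₃ = x₃ * x₂
  comm₂₄ : x₂ * x₄ = x₄ * x₂
  comm₃₄ : x₃ * x₄ = x₄ * x₃

theorem lie_X_X (t : ℝ) (i j : Fin 4) :
    ⁅X t i, X t j⁆ = engelBracket t (Pi.single i 1) (Pi.single j 1) :=
  rfl

section

attribute [local instance] LieRing.ofAssociativeRing

theorem XU_mul_XU_of_lie_eq {t : ℝ} {i j : Fin 4} {v : EngelAlg t} (h : ⁅X t i, X t j⁆ = v) :
    XU t i * XU t j = XU t j * XU t i + UniversalEnvelopingAlgebra.ι ℝ v := by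
  have hι := (UniversalEnvelopingAlgebra.ι ℝ (L := EngelAlg t)).map_lie (X t i) (X t j)
  rw [h, Ring.lie_def] at hι
  rw [XU, XU, hι, add_sub_cancel]

end

theorem isEngelTuple_XU (t : ℝ) : IsEngelTuple t (XU t 0) (XU t 1) (XU t 2) (XU t 3) where
  comm₁₂ := XU_mul_XU_of_lie_eq <| by
    rw [lie_X_X]; funext k; fin_cases k <;> simp [engelBracket, X]
  comm₁₃ := by
    rw [XU_mul_XU_of_lie_eq (v := t • X t 3), map_smul]
    · rfl
    rw [lie_X_X]; funext k; rw [EngelAlg.smul_apply]; fin_cases k <;> simp [engelBracket, X]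
  comm₁₄ := by
    simpa using XU_mul_XU_of_lie_eq (i := 0) (j := 3) (v := 0) <| by
      rw [lie_X_X]; funext k; fin_cases k <;> simp [engelBracket]
  comm₂₃ := by
    simpa using XU_mul_XU_of_lie_eq (i := 1) (j := 2) (v := 0) <| by
      rw [lie_X_X]; funext k; fin_cases k <;> simp [engelBracket]
  comm₂₄ := by
    simpa using XU_mul_XU_of_lie_eq (i := 1) (j := 3) (v := 0) <| by
      rw [lie_X_X]; funext k; fin_cases k <;> simp [engelBracket]
  comm₃₄ := by
    simpa using XU_mul_XU_of_lie_eq (i := 2) (j := 3) (v := 0) <| by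
      rw [lie_X_X]; funext k; fin_cases k <;> simp [engelBracket]

section Rumin

variable {K A : Type*} [Field K] [Ring A] [Algebra K A] (t : K) (x₁ x₂ x₃ x₄ : A)

def ruminD0 : Matrix (Fin 4) (Fin 1) A := !![x₁; x₂; 0; 0]

def ruminD1 : Matrix (Fin 6) (Fin 4) A :=
  !![0, 0, 0, 0;
     0, 0, 0, 0;
     -x₂ ^ 2, x₂ * x₁ - x₃, 0, 0;
     -x₄ - t⁻¹ • (x₁ ^ 2 * x₂ + x₁ * x₃), t⁻¹ • x₁ ^ 3, 0, 0;
     0, 0, 0, 0;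
     0, 0, 0, 0]

def ruminD2 : Matrix (Fin 4) (Fin 6) A :=
  !![0, 0, 0, 0, 0, 0;
     0, 0, 0, 0, 0, 0;
     0, 0, t⁻¹ • x₁ ^ 3, -x₃ - x₁ * x₂, 0, 0;
     0, 0, t⁻¹ • (x₁ ^ 2 * x₂ - 3 * (x₃ * x₁)), -x₂ ^ 2, 0, 0]

def ruminD3 : Matrix (Fin 1) (Fin 4) A := !![0, 0, -x₂, x₁]

variable {t x₁ x₂ x₃ x₄}

namespace IsEngelTuple

theorem ruminD1_mul_ruminD0 (h : IsEngelTuple t x₁ x₂ x₃ x₄) (ht : t ≠ 0) :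
    ruminD1 t x₁ x₂ x₃ x₄ * ruminD0 x₁ x₂ = 0 := by
  ext i j
  fin_cases i <;> fin_cases j <;> simp [ruminD0, ruminD1, Matrix.mul_apply, Fin.sum_univ_succ]
  all_goals
    simp only [pow_succ, pow_zero, one_mul, sub_mul, neg_mul, add_mul, mul_add,
      smul_mul_assoc, mul_smul_comm, mul_assoc, smul_add, smul_smul,
      h.comm₁₂, h.comm₁₃, h.comm₁₄, h.comm₂₃,
      mul_mul_eq_of_mul_eq h.comm₁₂, mul_mul_eq_of_mul_eq h.comm₁₃]
    match_scalars <;> ring_nf <;> simp [ht]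

theorem ruminD2_mul_ruminD1 (h : IsEngelTuple t x₁ x₂ x₃ x₄) (ht : t ≠ 0) :
    ruminD2 t x₁ x₂ x₃ * ruminD1 t x₁ x₂ x₃ x₄ = 0 := by
  ext i j
  fin_cases i <;> fin_cases j <;> simp [ruminD1, ruminD2, Matrix.mul_apply, Fin.sum_univ_succ]
  -- `match_scalars` only sees `•`, so the numeral factor `3` is rewritten as an `ℕ`-smul.
  all_goals
    simp only [pow_succ, pow_zero, one_mul, ← Nat.ofNat_nsmul_eq_mul, sub_mul, neg_mul, add_mul,
      mul_sub, mul_neg, mul_add, smul_mul_assoc, mul_smul_comm, mul_assoc, smul_add, smul_sub,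
      smul_neg, smul_smul, h.comm₁₂, h.comm₁₃, h.comm₁₄, h.comm₂₃, h.comm₂₄, h.comm₃₄,
      mul_mul_eq_of_mul_eq h.comm₁₂, mul_mul_eq_of_mul_eq h.comm₁₃,
      mul_mul_eq_of_mul_eq h.comm₁₄, mul_mul_eq_of_mul_eq h.comm₂₃,
      mul_mul_eq_of_mul_eq h.comm₂₄]
    match_scalars <;> ring_nf <;> simp [ht]

theorem ruminD3_mul_ruminD2 (h : IsEngelTuple t x₁ x₂ x₃ x₄) :
    ruminD3 x₁ x₂ * ruminD2 t x₁ x₂ x₃ = 0 := by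
  ext i j
  fin_cases j <;> simp [ruminD2, ruminD3, Matrix.mul_apply, Fin.sum_univ_succ]
  all_goals
    simp only [pow_succ, pow_zero, one_mul, ← Nat.ofNat_nsmul_eq_mul, add_mul, mul_sub, mul_neg,
      mul_add, smul_mul_assoc, mul_smul_comm, mul_assoc, smul_add, smul_sub, smul_smul, h.comm₁₂,
      h.comm₁₃, h.comm₁₄, h.comm₂₃, mul_mul_eq_of_mul_eq h.comm₁₂, mul_mul_eq_of_mul_eq h.comm₁₃]
    match_scalars <;> ring

end IsEngelTuple

end Rumin

/-- The Rumin differential matrices `D^{(k)}` of the Engel group satisfy `D ∘ D = 0`: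
`D^{(1)}·D^{(0)} = 0`, `D^{(2)}·D^{(1)} = 0`, `D^{(3)}·D^{(2)} = 0`. -/
theorem engel_rumin_D_squared_zero (t : ℝ) (ht : t ≠ 0) :
    let X1 := XU t 0; let X2 := XU t 1; let X3 := XU t 2; let X4 := XU t 3
    let D0 : Matrix (Fin 4) (Fin 1) (UEngel t) := !![X1; X2; 0; 0]
    let D1 : Matrix (Fin 6) (Fin 4) (UEngel t) :=
      !![0, 0, 0, 0;
         0, 0, 0, 0;
         -X2 ^ 2, X2 * X1 - X3, 0, 0;
         -X4 - t⁻¹ • (X1 ^ 2 * X2 + X1 * X3), t⁻¹ • X1 ^ 3, 0, 0;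
         0, 0, 0, 0;
         0, 0, 0, 0]
    let D2 : Matrix (Fin 4) (Fin 6) (UEngel t) :=
      !![0, 0, 0, 0, 0, 0;
         0, 0, 0, 0, 0, 0;
         0, 0, t⁻¹ • X1 ^ 3, -X3 - X1 * X2, 0, 0;
         0, 0, t⁻¹ • (X1 ^ 2 * X2 - 3 * (X3 * X1)), -X2 ^ 2, 0, 0]
    let D3 : Matrix (Fin 1) (Fin 4) (UEngel t) := !![0, 0, -X2, X1]
    D1 * D0 = 0 ∧ D2 * D1 = 0 ∧ D3 * D2 = 0 := by
  have h := isEngelTuple_XU t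
  exact ⟨h.ruminD1_mul_ruminD0 ht, h.ruminD2_mul_ruminD1 ht, h.ruminD3_mul_ruminD2⟩
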